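/- For any i, j ∈ 𝔖 with i ≺ j, any ε > 0, and any unit vector e ∈ S¹ with rational slope, there exists δ₀ > 0 such that for every x ∈ W_i and every δ ∈ (0, δ₀), there is a line segment [x', x' + δe] contained in W_j with ‖x' − x‖ ≤ εδ. -/

import Mathlib

open Filter

/-- Membership in the index set 𝔖: real sequences with `1 ≤ i r < N r` and `i r / N r → 0`. -/
def SSeq (N : ℕ → ℕ) (i : ℕ → ℝ) : Prop :=
  (∀ r, 1 ≤ i r ∧ i r < N r) ∧
  Tendsto (fun r => i r / (N r : ℝ)) atTop (nhds 0)

/-- The strict relation: `i ≺ j` iff `i r > j r` for all `r` and `i r / j r → ∞`. -/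
def Prec (i j : ℕ → ℝ) : Prop :=
  (∀ r, i r > j r) ∧ Tendsto (fun r => i r / j r) atTop atTop

/-- `i ≼ j` iff `i ≺ j` or `i = j`. -/
def Preceq (i j : ℕ → ℝ) : Prop := Prec i j ∨ i = j

/-- `dSeq N r = 1/(N_1 ⋯ N_r)` (with `dSeq N 0 = 1`), indices shifted to start at 0. -/
noncomputable def dSeq (N : ℕ → ℕ) : ℕ → ℝ := fun r => (∏ k ∈ Finset.range r, (N k : ℝ))⁻¹

/-- The Euclidean norm on the plane `ℝ × ℝ`. -/
noncomputable def eNorm (v : ℝ × ℝ) : ℝ := Real.sqrt (v.1 ^ 2 + v.2 ^ 2)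

/-- The set `W_i`: the complement of the union, over all levels `r` and all centres `c` in the
lattice `C_r = d_{r-1}((1/2,1/2)+ℤ²)`, of the open squares of side `i_r d_r` centred at `c`. -/
def Wset (N : ℕ → ℕ) (i : ℕ → ℝ) : Set (ℝ × ℝ) :=
  {x | ∀ r : ℕ, ∀ z : ℤ × ℤ,
    ¬ (|x.1 - dSeq N r * (1 / 2 + (z.1 : ℝ))| < i r * dSeq N (r + 1) / 2 ∧
       |x.2 - dSeq N r * (1 / 2 + (z.2 : ℝ))| < i r * dSeq N (r + 1) / 2)}

/-!
Write `p e₁ = q e₂` with `(p, q) ≠ 0`. The form `ℓ(y) = -p y₁ + q y₂` is constant along lines of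
direction `e`, sends the level-`r` centres onto a progression of step `d_r`, and sends each
level-`r` square removed from `W_j` into a window of radius `(|p| + |q|) j_r d_{r+1} / 2` around
a point of it. At a level with `4δ ≤ (i_r - j_r) d_{r+1}`, a segment within `2δ` of `x ∈ W_i`
misses these squares outright, and taking `δ₀` small makes this hold at the finitely many levels
where `j_r` is not yet negligible against `N_r` and `i_r`. At all other levels the windows are
tiny compared with the step `d_r` and with `εδ`, and the steps shrink geometrically, so nested
intervals produce a shift `τ ∈ [-εδ, εδ]` of `ℓ(x)` avoiding every window.
-/

open Set Topology

theorem exists_half_Ioo_disjoint_progression {g : ℝ} (hg : 0 < g) (c a : ℝ) {ℓ : ℝ} (hℓ : 0 ≤ ℓ)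
    (hℓg : ℓ ≤ g) :
    ∃ h ∈ Icc a (a + ℓ / 2), ∀ m : ℤ, c + m * g ≤ h ∨ h + ℓ / 2 ≤ c + m * g := by
  set k := ⌊(a - c) / g⌋
  have hk : c + k * g ≤ a := by
    have := (le_div_iff₀ hg).1 (Int.floor_le ((a - c) / g)); linarith
  have hk' : a < c + (k + 1) * g := by
    have := (div_lt_iff₀ hg).1 (Int.lt_floor_add_one ((a - c) / g)); linarith
  have below {n : ℤ} {m : ℤ} (hm : m ≤ n) : c + m * g ≤ c + n * g := by
    gcongr
  by_cases hnext : a + ℓ / 2 ≤ c + (k + 1) * g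
  · refine ⟨a, ⟨le_rfl, by linarith⟩, fun m => ?_⟩
    rcases le_or_gt m k with hm | hm
    · exact Or.inl ((below hm).trans hk)
    · refine Or.inr (hnext.trans ?_)
      have := below (show k + 1 ≤ m by omega); push_cast at this; linarith
  · refine ⟨a + ℓ / 2, ⟨by linarith, le_rfl⟩, fun m => ?_⟩
    rcases le_or_gt m (k + 1) with hm | hm
    · have := below hm; push_cast at this; exact Or.inl (by linarith)
    · have := below (show k + 2 ≤ m by omega); push_cast at this
      exact Or.inr (by linarith)

theorem exists_Icc_subset_forall_le_abs_sub {g ρ : ℝ} (hg : 0 < g) (hρ : 0 ≤ ρ) (c : ℝ)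
    {a b : ℝ} (hab : a ≤ b) :
    ∃ a' b', a ≤ a' ∧ b' ≤ b ∧ min g (b - a) / 2 - 2 * ρ ≤ b' - a' ∧
      ∀ t ∈ Icc a' b', ∀ m : ℤ, ρ ≤ |t - (c + m * g)| := by
  set ℓ := min g (b - a)
  obtain ⟨h, ⟨hah, hhb⟩, hfree⟩ := exists_half_Ioo_disjoint_progression hg c a
    (le_min hg.le (sub_nonneg.2 hab)) (min_le_left _ _)
  have hℓ : ℓ ≤ b - a := min_le_right _ _
  refine ⟨h + ρ, h + ℓ / 2 - ρ, by linarith, by linarith, by linarith, fun t ⟨ht, ht'⟩ m => ?_⟩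
  rcases hfree m with hm | hm
  · exact le_abs.2 (Or.inl (by linarith))
  · exact le_abs.2 (Or.inr (by linarith))

theorem exists_mem_Icc_forall_le_abs_sub (P : ℕ → Prop) {a b : ℝ} (hab : a < b)
    {g ρ c : ℕ → ℝ} (hg : ∀ u, 0 < g u) (hg' : Antitone g) (hρ : ∀ u, 0 ≤ ρ u)
    (hP : ∀ u, P u → 4 * g (u + 1) ≤ min (b - a) (g u) ∧ 32 * ρ u ≤ min (b - a) (g u)) :
    ∃ t ∈ Icc a b, ∀ u, P u → ∀ m : ℤ, ρ u ≤ |t - (c u + m * g u)| := by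
  set L := b - a
  have hL : 0 < L := sub_pos.2 hab
  -- The invariant `min L (g u) ≤ 4 * length` survives one step because `ρ u` and `g (u + 1)`
  -- are small compared to `min L (g u)`.
  have step : ∀ u (J : ℝ × ℝ), ∃ J' : ℝ × ℝ, min L (g u) ≤ 4 * (J.2 - J.1) →
      J.1 ≤ J'.1 ∧ J'.2 ≤ J.2 ∧ min L (g (u + 1)) ≤ 4 * (J'.2 - J'.1) ∧
        (P u → ∀ t ∈ Icc J'.1 J'.2, ∀ m : ℤ, ρ u ≤ |t - (c u + m * g u)|) := by
    intro u J
    have hmin : min L (g (u + 1)) ≤ min L (g u) := min_le_min_left _ (hg' u.le_succ)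
    have hpos : 0 < min L (g u) := lt_min hL (hg u)
    by_cases hu : P u
    · by_cases hJ : min L (g u) ≤ 4 * (J.2 - J.1)
      · obtain ⟨a', b', ha', hb', hlen, havoid⟩ :=
          exists_Icc_subset_forall_le_abs_sub (hg u) (hρ u) (c u) (a := J.1) (b := J.2)
            (by linarith)
        refine ⟨(a', b'), fun _ => ⟨ha', hb', ?_, fun _ => havoid⟩⟩
        have hℓ : min L (g u) / 4 ≤ min (g u) (J.2 - J.1) :=
          le_min (by linarith [min_le_right L (g u)]) (by linarith)
        obtain ⟨hg4, hρ32⟩ := hP u hu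
        linarith [min_le_right L (g (u + 1))]
      · exact ⟨J, fun h => absurd h hJ⟩
    · exact ⟨J, fun h => ⟨le_rfl, le_rfl, hmin.trans h, fun h => absurd h hu⟩⟩
  choose f hf using step
  let I : ℕ → ℝ × ℝ := fun u => Nat.rec (motive := fun _ => ℝ × ℝ) (a, b) f u
  have hinv : ∀ u, min L (g u) ≤ 4 * ((I u).2 - (I u).1) := by
    intro u
    induction u with
    | zero => show min L (g 0) ≤ 4 * (b - a); linarith [min_le_left L (g 0)]
    | succ u ih => exact (hf u (I u) ih).2.2.1
  have hle : ∀ u, (I u).1 ≤ (I u).2 := fun u => by linarith [hinv u, lt_min hL (hg u)]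
  have hanti : Antitone fun u => Icc (I u).1 (I u).2 :=
    antitone_nat_of_succ_le fun u =>
      Icc_subset_Icc (hf u (I u) (hinv u)).1 (hf u (I u) (hinv u)).2.1
  have hmem := mem_iInter.1 (ciSup_mem_iInter_Icc_of_antitone_Icc hanti hle)
  exact ⟨_, hmem 0, fun u hu => (hf u (I u) (hinv u)).2.2.2 hu _ (hmem (u + 1))⟩

theorem eNorm_nonneg (v : ℝ × ℝ) : 0 ≤ eNorm v := Real.sqrt_nonneg _

theorem abs_fst_le_eNorm (v : ℝ × ℝ) : |v.1| ≤ eNorm v :=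
  Real.abs_le_sqrt (le_add_of_nonneg_right (sq_nonneg _))

theorem abs_snd_le_eNorm (v : ℝ × ℝ) : |v.2| ≤ eNorm v :=
  Real.abs_le_sqrt (le_add_of_nonneg_left (sq_nonneg _))

theorem eNorm_le_abs_add_abs (v : ℝ × ℝ) : eNorm v ≤ |v.1| + |v.2| := by
  refine Real.sqrt_le_iff.2 ⟨by positivity, ?_⟩
  nlinarith [sq_abs v.1, sq_abs v.2, abs_nonneg v.1, abs_nonneg v.2]

theorem eNorm_smul (a : ℝ) (v : ℝ × ℝ) : eNorm (a • v) = |a| * eNorm v := by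
  simp only [eNorm, Prod.smul_fst, Prod.smul_snd, smul_eq_mul]
  rw [show (a * v.1) ^ 2 + (a * v.2) ^ 2 = a ^ 2 * (v.1 ^ 2 + v.2 ^ 2) by ring,
    Real.sqrt_mul (sq_nonneg a), Real.sqrt_sq_eq_abs]

theorem abs_fst_add_le (v u : ℝ × ℝ) : |(v + u).1| ≤ eNorm v + eNorm u :=
  (abs_add_le _ _).trans (add_le_add (abs_fst_le_eNorm v) (abs_fst_le_eNorm u))

theorem abs_snd_add_le (v u : ℝ × ℝ) : |(v + u).2| ≤ eNorm v + eNorm u :=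
  (abs_add_le _ _).trans (add_le_add (abs_snd_le_eNorm v) (abs_snd_le_eNorm u))

theorem one_le_abs_add_abs {p q : ℤ} (hpq : (p, q) ≠ (0, 0)) : (1 : ℝ) ≤ |(p : ℝ)| + |(q : ℝ)| := by
  have : 1 ≤ |p| + |q| := by
    by_cases hp : p = 0
    · have hq : q ≠ 0 := by rintro rfl; exact hpq (by rw [hp])
      linarith [Int.one_le_abs hq, abs_nonneg p]
    · linarith [Int.one_le_abs hp, abs_nonneg q]
  exact_mod_cast this

theorem abs_add_abs_le_sq_add_sq (p q : ℤ) : |(p : ℝ)| + |(q : ℝ)| ≤ p ^ 2 + q ^ 2 := by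
  have := add_le_add (Int.le_self_sq |p|) (Int.le_self_sq |q|)
  rw [sq_abs, sq_abs] at this
  exact_mod_cast this

theorem exists_abs_sub_lt_of_mem_square {p q : ℤ} (hpq : (p, q) ≠ (0, 0)) {d h : ℝ}
    {y : ℝ × ℝ} {z : ℤ × ℤ} (h₁ : |y.1 - d * (1 / 2 + z.1)| < h)
    (h₂ : |y.2 - d * (1 / 2 + z.2)| < h) :
    ∃ m : ℤ, |(-p * y.1 + q * y.2) - (d * (q - p) / 2 + m * d)| < (|(p : ℝ)| + |(q : ℝ)|) * h := by
  refine ⟨q * z.2 - p * z.1, ?_⟩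
  have hK := one_le_abs_add_abs hpq
  calc |(-p * y.1 + q * y.2) - (d * (q - p) / 2 + ((q * z.2 - p * z.1 : ℤ) : ℝ) * d)|
      = |-p * (y.1 - d * (1 / 2 + z.1)) + q * (y.2 - d * (1 / 2 + z.2))| := by
        congr 1; push_cast; ring
    _ ≤ |(p : ℝ)| * |y.1 - d * (1 / 2 + z.1)| + |(q : ℝ)| * |y.2 - d * (1 / 2 + z.2)| :=
        (abs_add_le _ _).trans_eq (by rw [abs_mul, abs_mul, abs_neg])
    _ ≤ (|(p : ℝ)| + |(q : ℝ)|) * max |y.1 - d * (1 / 2 + z.1)| |y.2 - d * (1 / 2 + z.2)| := by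
        rw [add_mul]
        gcongr
        exacts [le_max_left _ _, le_max_right _ _]
    _ < (|(p : ℝ)| + |(q : ℝ)|) * h := mul_lt_mul_of_pos_left (max_lt h₁ h₂) (by linarith)

/-- A vector on which `(y₁, y₂) ↦ -p y₁ + q y₂` takes the value `1` and which is orthogonal to
every `e` with `p e₁ = q e₂`. -/
noncomputable def slopeNormal (p q : ℤ) : ℝ × ℝ := (-p / (p ^ 2 + q ^ 2), q / (p ^ 2 + q ^ 2))

theorem slopeNormal_form {p q : ℤ} (hpq : (p, q) ≠ (0, 0)) :
    -p * (slopeNormal p q).1 + q * (slopeNormal p q).2 = 1 := by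
  have : (0 : ℝ) < p ^ 2 + q ^ 2 := by
    linarith [one_le_abs_add_abs hpq, abs_add_abs_le_sq_add_sq p q]
  simp only [slopeNormal]
  field_simp

theorem eNorm_slopeNormal_le_one (p q : ℤ) : eNorm (slopeNormal p q) ≤ 1 := by
  refine (eNorm_le_abs_add_abs _).trans ?_
  rw [slopeNormal, abs_div, abs_div, abs_neg,
    abs_of_nonneg (show (0 : ℝ) ≤ p ^ 2 + q ^ 2 by positivity), ← add_div]
  exact div_le_one_of_le₀ (abs_add_abs_le_sq_add_sq p q) (by positivity)

section Levels

variable {N : ℕ → ℕ}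

theorem dSeq_succ (r : ℕ) : dSeq N (r + 1) = dSeq N r / N r := by
  rw [dSeq, dSeq, Finset.prod_range_succ, mul_inv, div_eq_mul_inv]

theorem dSeq_pos (hN : ∀ r, 0 < N r) (r : ℕ) : 0 < dSeq N r :=
  inv_pos.2 (Finset.prod_pos fun k _ => Nat.cast_pos.2 (hN k))

theorem natCast_mul_dSeq_succ (hN : ∀ r, 0 < N r) (r : ℕ) :
    N r * dSeq N (r + 1) = dSeq N r := by
  rw [dSeq_succ]; field_simp [(Nat.cast_pos.2 (hN r)).ne']

theorem dSeq_antitone (hN : ∀ r, 0 < N r) : Antitone (dSeq N) :=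
  antitone_nat_of_succ_le fun r => by
    rw [dSeq_succ]; exact div_le_self (dSeq_pos hN r).le (Nat.one_le_cast.2 (hN r))

theorem notMem_square_of_mem_Wset {i j : ℕ → ℝ} {x y : ℝ × ℝ} (hx : x ∈ Wset N i) {η : ℝ}
    (hy₁ : |y.1 - x.1| ≤ η) (hy₂ : |y.2 - x.2| ≤ η) {r : ℕ}
    (hη : 2 * η ≤ (i r - j r) * dSeq N (r + 1)) (z : ℤ × ℤ) :
    ¬ (|y.1 - dSeq N r * (1 / 2 + (z.1 : ℝ))| < j r * dSeq N (r + 1) / 2 ∧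
       |y.2 - dSeq N r * (1 / 2 + (z.2 : ℝ))| < j r * dSeq N (r + 1) / 2) := by
  rintro ⟨h₁, h₂⟩
  refine hx r z ⟨?_, ?_⟩
  · linarith [abs_sub_le x.1 y.1 (dSeq N r * (1 / 2 + (z.1 : ℝ))), abs_sub_comm x.1 y.1]
  · linarith [abs_sub_le x.2 y.2 (dSeq N r * (1 / 2 + (z.2 : ℝ))), abs_sub_comm x.2 y.2]
theorem exists_abs_le_forall_le_abs_sub_dSeq (hN : ∀ r, 0 < N r) {i j : ℕ → ℝ}
    (hj : ∀ r, 1 ≤ j r) {K ε δ : ℝ} (hK : 1 ≤ K) (hε : 0 < ε) (hδ : 0 < δ) (c : ℕ → ℝ)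
    (hlevel : ∀ r, (i r - j r) * dSeq N (r + 1) < 4 * δ →
      16 * K * j r ≤ N r ∧ 32 * K * j r ≤ ε * (i r - j r)) :
    ∃ τ, |τ| ≤ ε * δ ∧ ∀ r, (i r - j r) * dSeq N (r + 1) < 4 * δ →
      ∀ m : ℤ, K * (j r * dSeq N (r + 1) / 2) ≤ |τ - (c r + m * dSeq N r)| := by
  have hd := dSeq_pos hN
  have hsmall : ∀ r, (i r - j r) * dSeq N (r + 1) < 4 * δ →
      4 * dSeq N (r + 1) ≤ min (ε * δ - -(ε * δ)) (dSeq N r) ∧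
        32 * (K * (j r * dSeq N (r + 1) / 2)) ≤ min (ε * δ - -(ε * δ)) (dSeq N r) := by
    intro r hr
    obtain ⟨hNr, hij⟩ := hlevel r hr
    have hNd := natCast_mul_dSeq_succ hN r
    have hd' := hd (r + 1)
    have hjr := hj r
    have hN16 : 16 ≤ (N r : ℝ) := by nlinarith
    have hij32 : 32 ≤ ε * (i r - j r) := by nlinarith
    have hεr : ε * ((i r - j r) * dSeq N (r + 1)) ≤ ε * (4 * δ) := by gcongr
    refine ⟨le_min ?_ ?_, le_min ?_ ?_⟩ <;> nlinarith
  obtain ⟨τ, hτ, havoid⟩ := exists_mem_Icc_forall_le_abs_sub _ (by nlinarith) hd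
    (dSeq_antitone hN) (fun r => by have := hj r; have := hd (r + 1); positivity) hsmall
  exact ⟨τ, abs_le.2 hτ, havoid⟩

theorem segment_subset_Wset_of_forall_le_abs_sub {i j : ℕ → ℝ} {p q : ℤ}
    (hpq : (p, q) ≠ (0, 0)) {e : ℝ × ℝ} (he : eNorm e ≤ 1) (hpe : (p : ℝ) * e.1 = q * e.2)
    {δ τ : ℝ} (hδ : 0 < δ) (hτ : |τ| ≤ δ) {x : ℝ × ℝ} (hx : x ∈ Wset N i)
    (havoid : ∀ r, (i r - j r) * dSeq N (r + 1) < 4 * δ → ∀ m : ℤ,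
      (|(p : ℝ)| + |(q : ℝ)|) * (j r * dSeq N (r + 1) / 2) ≤
        |τ - (dSeq N r * (q - p) / 2 - (-p * x.1 + q * x.2) + m * dSeq N r)|) :
    segment ℝ (x + τ • slopeNormal p q) (x + τ • slopeNormal p q + δ • e) ⊆ Wset N j := by
  intro y hy
  rw [segment_eq_image'] at hy
  obtain ⟨θ, ⟨hθ₀, hθ₁⟩, rfl⟩ := hy
  rw [add_sub_cancel_left]
  beta_reduce
  rw [add_assoc]
  intro r z hsq
  by_cases hr : (i r - j r) * dSeq N (r + 1) < 4 * δ
  · obtain ⟨m, hm⟩ := exists_abs_sub_lt_of_mem_square hpq hsq.1 hsq.2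
    have hform : -p * (x + (τ • slopeNormal p q + θ • δ • e)).1
        + q * (x + (τ • slopeNormal p q + θ • δ • e)).2 = -p * x.1 + q * x.2 + τ := by
      have := slopeNormal_form hpq
      simp only [Prod.fst_add, Prod.snd_add, Prod.smul_fst, Prod.smul_snd, smul_eq_mul]
      linear_combination τ * this - θ * δ * hpe
    rw [hform] at hm
    have := havoid r hr m
    rw [show τ - (dSeq N r * (q - p) / 2 - (-p * x.1 + q * x.2) + m * dSeq N r)
      = -p * x.1 + q * x.2 + τ - (dSeq N r * (q - p) / 2 + m * dSeq N r) by ring] at this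
    exact not_lt.2 this hm
  · have hτw : eNorm (τ • slopeNormal p q) ≤ δ := by
      rw [eNorm_smul]
      exact (mul_le_of_le_one_right (abs_nonneg τ) (eNorm_slopeNormal_le_one p q)).trans hτ
    have hθe : eNorm (θ • δ • e) ≤ δ := by
      rw [eNorm_smul, eNorm_smul, abs_of_nonneg hθ₀, abs_of_pos hδ]
      exact (mul_le_of_le_one_left (mul_nonneg hδ.le (eNorm_nonneg e)) hθ₁).trans
        (mul_le_of_le_one_right hδ.le he)
    refine notMem_square_of_mem_Wset hx (η := 2 * δ) ?_ ?_ (by linarith) z hsq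
    · rw [Prod.fst_add, add_sub_cancel_left]
      linarith [abs_fst_add_le (τ • slopeNormal p q) (θ • δ • e)]
    · rw [Prod.snd_add, add_sub_cancel_left]
      linarith [abs_snd_add_le (τ • slopeNormal p q) (θ • δ • e)]

theorem exists_segment_subset_Wset (hN : ∀ r, 0 < N r) {i j : ℕ → ℝ} (hj : ∀ r, 1 ≤ j r)
    {p q : ℤ} (hpq : (p, q) ≠ (0, 0)) {e : ℝ × ℝ} (he : eNorm e ≤ 1)
    (hpe : (p : ℝ) * e.1 = q * e.2) {ε δ : ℝ} (hε : 0 < ε) (hε₁ : ε ≤ 1) (hδ : 0 < δ)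
    (hlevel : ∀ r, (i r - j r) * dSeq N (r + 1) < 4 * δ →
      16 * (|(p : ℝ)| + |(q : ℝ)|) * j r ≤ N r ∧
        32 * (|(p : ℝ)| + |(q : ℝ)|) * j r ≤ ε * (i r - j r))
    {x : ℝ × ℝ} (hx : x ∈ Wset N i) :
    ∃ x' : ℝ × ℝ, segment ℝ x' (x' + δ • e) ⊆ Wset N j ∧ eNorm (x' - x) ≤ ε * δ := by
  obtain ⟨τ, hτ, havoid⟩ := exists_abs_le_forall_le_abs_sub_dSeq hN hj
    (one_le_abs_add_abs hpq) hε hδ (fun r => dSeq N r * (q - p) / 2 - (-p * x.1 + q * x.2))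
    hlevel
  refine ⟨x + τ • slopeNormal p q, segment_subset_Wset_of_forall_le_abs_sub hpq he hpe hδ
    (hτ.trans (mul_le_of_le_one_left hδ.le hε₁)) hx havoid, ?_⟩
  rw [add_sub_cancel_left, eNorm_smul]
  exact (mul_le_of_le_one_right (abs_nonneg τ) (eNorm_slopeNormal_le_one p q)).trans hτ

theorem SSeq.pos {j : ℕ → ℝ} (hj : SSeq N j) (r : ℕ) : 0 < N r := by
  obtain ⟨h₁, h₂⟩ := hj.1 r
  exact_mod_cast (show (0 : ℝ) < N r by linarith)

theorem SSeq.eventually_mul_le {j : ℕ → ℝ} (hj : SSeq N j) {C : ℝ} (hC : 0 < C) :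
    ∀ᶠ r in atTop, C * j r ≤ N r := by
  filter_upwards [hj.2.eventually (eventually_le_nhds (inv_pos.2 hC))] with r hr
  rw [div_le_iff₀ (Nat.cast_pos.2 (hj.pos r)), inv_mul_eq_div, le_div_iff₀' hC] at hr
  exact hr

theorem Prec.eventually_mul_le {i j : ℕ → ℝ} (hij : Prec i j) (hj : ∀ r, 0 < j r) (C : ℝ) :
    ∀ᶠ r in atTop, C * j r ≤ i r - j r := by
  filter_upwards [hij.2.eventually_ge_atTop (1 + C)] with r hr
  rw [le_div_iff₀ (hj r)] at hr
  linarith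

end Levels

theorem stmt8_general (N : ℕ → ℕ)
    (i j : ℕ → ℝ) (hj : SSeq N j) (hij : Prec i j)
    (ε : ℝ) (hε : 0 < ε) (e : ℝ × ℝ) (he : eNorm e = 1)
    (hrat : ∃ p q : ℤ, (p, q) ≠ (0, 0) ∧ (p : ℝ) * e.1 = (q : ℝ) * e.2) :
    ∃ δ₀ > 0, ∀ x ∈ Wset N i, ∀ δ ∈ Set.Ioo 0 δ₀,
      ∃ x' : ℝ × ℝ, segment ℝ x' (x' + δ • e) ⊆ Wset N j ∧ eNorm (x' - x) ≤ ε * δ := by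
  obtain ⟨p, q, hpq, hpe⟩ := hrat
  set K := |(p : ℝ)| + |(q : ℝ)|
  have hK : 1 ≤ K := one_le_abs_add_abs hpq
  set ε' := min ε 1
  have hε' : 0 < ε' := lt_min hε one_pos
  have hj₁ : ∀ r, 1 ≤ j r := fun r => (hj.1 r).1
  obtain ⟨R, hR⟩ := eventually_atTop.1 ((hj.eventually_mul_le (by positivity : 0 < 16 * K)).and
    (hij.eventually_mul_le (fun r => by linarith [hj₁ r]) (32 * K / ε')))
  have hfree : ∀ᶠ δ in 𝓝[>] 0, ∀ r ∈ Finset.range R, 4 * δ ≤ (i r - j r) * dSeq N (r + 1) := by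
    refine (eventually_all_finset _).2 fun r _ => ?_
    have : 0 < (i r - j r) * dSeq N (r + 1) :=
      mul_pos (sub_pos.2 (hij.1 r)) (dSeq_pos hj.pos (r + 1))
    filter_upwards [nhdsWithin_le_nhds (eventually_le_nhds (div_pos this four_pos))]
      with δ hδ
    linarith
  obtain ⟨δ₀, hδ₀, hsub⟩ := mem_nhdsGT_iff_exists_Ioo_subset.1 hfree
  refine ⟨δ₀, hδ₀, fun x hx δ hδ => ?_⟩
  have hlevel (r : ℕ) (hr : (i r - j r) * dSeq N (r + 1) < 4 * δ) :
      16 * K * j r ≤ N r ∧ 32 * K * j r ≤ ε' * (i r - j r) := by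
    have hRr : R ≤ r := le_of_not_gt fun hrR => (hsub hδ r (Finset.mem_range.2 hrR)).not_gt hr
    obtain ⟨hN, hi⟩ := hR r hRr
    rw [div_mul_eq_mul_div, div_le_iff₀' hε'] at hi
    exact ⟨hN, hi⟩
  obtain ⟨x', hseg, hx'⟩ := exists_segment_subset_Wset hj.pos hj₁ hpq he.le hpe hε'
    (min_le_right _ _) hδ.1 hlevel hx
  exact ⟨x', hseg, hx'.trans (mul_le_mul_of_nonneg_right (min_le_left _ _) hδ.1.le)⟩

theorem stmt8 (N : ℕ → ℕ) (hN : ∀ r, 1 < N r)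
    (hNtend : Filter.Tendsto (fun r => (N r : ℝ)) Filter.atTop Filter.atTop)
    (i j : ℕ → ℝ) (hi : SSeq N i) (hj : SSeq N j) (hij : Prec i j)
    (ε : ℝ) (hε : 0 < ε) (e : ℝ × ℝ) (he : eNorm e = 1)
    (hrat : ∃ p q : ℤ, (p, q) ≠ (0, 0) ∧ (p : ℝ) * e.1 = (q : ℝ) * e.2) :
    ∃ δ₀ > 0, ∀ x ∈ Wset N i, ∀ δ ∈ Set.Ioo 0 δ₀,
      ∃ x' : ℝ × ℝ, segment ℝ x' (x' + δ • e) ⊆ Wset N j ∧ eNorm (x' - x) ≤ ε * δ :=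
  stmt8_general N i j hj hij ε hε e he hrat
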